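/- Let m(g,d,t,T_p) = 0.6·μ_s + 0.4·μ_a denote the effective reproduction number of the (g,d,t) schedule with daily per-contact transmission probability T_p. For T_p = 0.1, the schedules (1,5,2) and (2,5,0) satisfy m > 1 (values 6.164 and 2.278 respectively), so that the expected generation sizes E[X_n] = m^n of the associated Galton–Watson branching process grow without bound; whereas the schedules (3,3,0) and (4,4,0) satisfy m < 1 (values 0.804 and 0.67 respectively), so that E[X_n] → 0 and the associated process dies out almost surely. -/

import Mathlib

/-!
For the four schedules a full cycle `g d + t` covers at least half of the 11-day window, so each
series in `μ_s`, `μ_a` reduces to its first term and `m` is an explicit rational number.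

In the branching process, `X n` is determined by the offspring counts of the earlier generations,
hence independent of every `ξ (n, i)`. Wald's identity `E[∑_{i<N} ξ_i] = E[N] E[ξ]` then gives
`E[X (n+1)] = m E[X n]`, so `E[X n] = m ^ n`. When `m < 1` the probabilities
`P(X n ≠ 0) ≤ E[X n] = m ^ n` are summable, and Borel–Cantelli gives almost sure extinction.
-/

/-- `d' = max(0, min(d-2, 5))`: initial scheduled infectious days of a symptomatic
individual under the `(g,d,t)` mechanism. -/
noncomputable def dPrime (d : ℕ) : ℝ := max 0 (min ((d : ℝ) - 2) 5)

/-- `d'_i = max(0, min(5 - (g*d+t)*i, d))`. -/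
noncomputable def dPrimeI (g d t i : ℕ) : ℝ :=
  max 0 (min (5 - ((g : ℝ) * d + t) * i) (d : ℝ))

/-- Symptomatic reproductive rate `μ_s = T_p * D^g_s * (13.4 / g)` of the `(g,d,t)`
mechanism, where `D^g_s = d' + Σ_{i=1}^∞ d'_i`. -/
noncomputable def muS (g d t : ℕ) (Tp : ℝ) : ℝ :=
  Tp * (dPrime d + ∑' i : ℕ, dPrimeI g d t (i + 1)) * (13.4 / g)

/-- `d'' = max(0, min(d-2, 11))`: initial scheduled infectious days of an asymptomatic
individual under the `(g,d,t)` mechanism. -/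
noncomputable def dDPrime (d : ℕ) : ℝ := max 0 (min ((d : ℝ) - 2) 11)

/-- `d''_i = max(0, min(11 - (g*d+t)*i, d))`. -/
noncomputable def dDPrimeI (g d t i : ℕ) : ℝ :=
  max 0 (min (11 - ((g : ℝ) * d + t) * i) (d : ℝ))

/-- Asymptomatic reproductive rate `μ_a = T_p * D^g_a * (13.4 / g)` of the `(g,d,t)`
mechanism, where `D^g_a = d'' + Σ_{i=1}^∞ d''_i`. -/
noncomputable def muA (g d t : ℕ) (Tp : ℝ) : ℝ :=
  Tp * (dDPrime d + ∑' i : ℕ, dDPrimeI g d t (i + 1)) * (13.4 / g)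

/-- Effective reproduction number `m(g,d,t,T_p) = 0.6 μ_s + 0.4 μ_a` of the
`(g,d,t)` schedule with daily per-contact transmission probability `T_p`. -/
noncomputable def effR (g d t : ℕ) (Tp : ℝ) : ℝ :=
  0.6 * muS g d t Tp + 0.4 * muA g d t Tp

open MeasureTheory ProbabilityTheory Filter
open scoped ENNReal

lemma tsum_max_zero_min_sub_mul_succ {w P c : ℝ} (hP : w ≤ 2 * P) (hP0 : 0 ≤ P) :
    ∑' i : ℕ, max 0 (min (w - P * ((i + 1 : ℕ) : ℝ)) c) = max 0 (min (w - P) c) := by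
  rw [tsum_eq_single 0 fun i hi => max_eq_left <| (min_le_left _ _).trans ?_]
  · simp
  · have : (2 : ℝ) ≤ i + 1 := by norm_cast; omega
    push_cast
    nlinarith

lemma effR_eq_of_eleven_le_two_mul {g d t : ℕ} (h : 11 ≤ 2 * ((g : ℝ) * d + t)) (Tp : ℝ) :
    effR g d t Tp = Tp * (13.4 / g) *
      (0.6 * (dPrime d + dPrimeI g d t 1) + 0.4 * (dDPrime d + dDPrimeI g d t 1)) := by
  have hP : 0 ≤ (g : ℝ) * d + t := by positivity
  have hs : ∑' i : ℕ, dPrimeI g d t (i + 1) = dPrimeI g d t 1 := by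
    simpa [dPrimeI] using tsum_max_zero_min_sub_mul_succ (c := (d : ℝ)) (by linarith) hP
  have ha : ∑' i : ℕ, dDPrimeI g d t (i + 1) = dDPrimeI g d t 1 := by
    simpa [dDPrimeI] using tsum_max_zero_min_sub_mul_succ (c := (d : ℝ)) h hP
  rw [effR, muS, muA, hs, ha]
  ring

lemma effR_nonneg (g d t : ℕ) {Tp : ℝ} (hTp : 0 ≤ Tp) : 0 ≤ effR g d t Tp := by
  unfold effR muS muA dPrime dPrimeI dDPrime dDPrimeI
  positivity

lemma effR_one_five_two : effR 1 5 2 0.1 = 6.164 := by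
  rw [effR_eq_of_eleven_le_two_mul (by norm_num)]
  norm_num [dPrime, dPrimeI, dDPrime, dDPrimeI]

lemma effR_two_five_zero : effR 2 5 0 0.1 = 2.278 := by
  rw [effR_eq_of_eleven_le_two_mul (by norm_num)]
  norm_num [dPrime, dPrimeI, dDPrime, dDPrimeI]

lemma effR_three_three_zero : effR 3 3 0 0.1 = 0.804 := by
  rw [effR_eq_of_eleven_le_two_mul (by norm_num)]
  norm_num [dPrime, dPrimeI, dDPrime, dDPrimeI]

lemma effR_four_four_zero : effR 4 4 0 0.1 = 0.67 := by
  rw [effR_eq_of_eleven_le_two_mul (by norm_num)]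
  norm_num [dPrime, dPrimeI, dDPrime, dDPrimeI]

section

variable {Ω : Type*}

lemma Measurable.sum_range_of_nat {m : MeasurableSpace Ω} {N : Ω → ℕ} {f : ℕ → Ω → ℕ}
    (hN : Measurable N) (hf : ∀ i, Measurable (f i)) :
    Measurable fun ω => ∑ i ∈ Finset.range (N ω), f i ω :=
  (measurable_from_prod_countable_left (f := fun p : Ω × ℕ => ∑ i ∈ Finset.range p.2, f i p.1)
    fun k => Finset.measurable_sum (Finset.range k) fun i _ => hf i).comp (measurable_id.prodMk hN)

lemma natCast_sum_range_eq_tsum_indicator (N : Ω → ℕ) (f : ℕ → Ω → ℕ) (ω : Ω) :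
    ((∑ i ∈ Finset.range (N ω), f i ω : ℕ) : ℝ≥0∞)
      = ∑' i, (Set.Ioi i).indicator 1 (N ω) * (f i ω : ℝ≥0∞) := by
  rw [Nat.cast_sum, sum_eq_tsum_indicator]
  congr 1 with i
  by_cases hi : i < N ω <;> simp [hi]

variable [MeasurableSpace Ω] {μ : Measure Ω} {N : Ω → ℕ}

lemma lintegral_indicator_Ioi_one (hN : Measurable N) (i : ℕ) :
    ∫⁻ ω, (Set.Ioi i).indicator 1 (N ω) ∂μ = μ (N ⁻¹' Set.Ioi i) := by
  simp_rw [← Set.indicator_comp_right]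
  exact lintegral_indicator_one (hN measurableSet_Ioi)

lemma lintegral_natCast_eq_tsum_measure_Ioi (hN : Measurable N) :
    ∫⁻ ω, (N ω : ℝ≥0∞) ∂μ = ∑' i, μ (N ⁻¹' Set.Ioi i) := by
  have := natCast_sum_range_eq_tsum_indicator N (fun _ _ => 1)
  simp only [Finset.sum_const, Finset.card_range, smul_eq_mul, mul_one, Nat.cast_one] at this
  rw [lintegral_congr this, lintegral_tsum (f := fun i ω => (Set.Ioi i).indicator 1 (N ω)) fun i =>
    ((Measurable.of_discrete (f := (Set.Ioi i).indicator 1)).comp hN).aemeasurable]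
  exact tsum_congr (lintegral_indicator_Ioi_one hN)

lemma lintegral_sum_range_eq_mul (hN : Measurable N) {f : ℕ → Ω → ℕ}
    (hf : ∀ i, Measurable (f i)) (hindep : ∀ i, IndepFun N (f i) μ) {c : ℝ≥0∞}
    (hc : ∀ i, ∫⁻ ω, (f i ω : ℝ≥0∞) ∂μ = c) :
    ∫⁻ ω, ((∑ i ∈ Finset.range (N ω), f i ω : ℕ) : ℝ≥0∞) ∂μ = (∫⁻ ω, (N ω : ℝ≥0∞) ∂μ) * c := by
  have hind : ∀ i, Measurable fun ω => (Set.Ioi i).indicator (1 : ℕ → ℝ≥0∞) (N ω) :=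
    fun i => (Measurable.of_discrete (f := (Set.Ioi i).indicator 1)).comp hN
  have hcast : ∀ i, Measurable fun ω => (f i ω : ℝ≥0∞) :=
    fun i => (Measurable.of_discrete (f := ((↑) : ℕ → ℝ≥0∞))).comp (hf i)
  have hterm : ∀ i, ∫⁻ ω, (Set.Ioi i).indicator 1 (N ω) * (f i ω : ℝ≥0∞) ∂μ
      = μ (N ⁻¹' Set.Ioi i) * c := fun i => by
    rw [lintegral_mul_eq_lintegral_mul_lintegral_of_indepFun'' (hind i).aemeasurable
      (hcast i).aemeasurable
      ((hindep i).comp (Measurable.of_discrete (f := (Set.Ioi i).indicator 1))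
        (Measurable.of_discrete (f := ((↑) : ℕ → ℝ≥0∞)))),
      lintegral_indicator_Ioi_one hN, hc]
  rw [lintegral_congr (natCast_sum_range_eq_tsum_indicator N f),
    lintegral_tsum (f := fun i ω => (Set.Ioi i).indicator 1 (N ω) * (f i ω : ℝ≥0∞))
      fun i => ((hind i).mul (hcast i)).aemeasurable,
    tsum_congr hterm, ENNReal.tsum_mul_right, lintegral_natCast_eq_tsum_measure_Ioi hN]

lemma integral_natCast_eq_toReal_lintegral {f : Ω → ℕ} (hf : Measurable f) :
    ∫ ω, (f ω : ℝ) ∂μ = (∫⁻ ω, (f ω : ℝ≥0∞) ∂μ).toReal := by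
  rw [integral_eq_lintegral_of_nonneg_ae (ae_of_all _ fun ω => Nat.cast_nonneg _)
    ((Measurable.of_discrete (f := ((↑) : ℕ → ℝ))).comp hf).aestronglyMeasurable]
  simp_rw [ENNReal.ofReal_natCast]

lemma ae_eventually_eq_zero_of_tsum_lintegral_ne_top {f : ℕ → Ω → ℕ} (hf : ∀ n, Measurable (f n))
    (h : ∑' n, ∫⁻ ω, (f n ω : ℝ≥0∞) ∂μ ≠ ∞) : ∀ᵐ ω ∂μ, ∀ᶠ n in atTop, f n ω = 0 := by
  have hle : ∀ n, μ {ω | f n ω ≠ 0} ≤ ∫⁻ ω, (f n ω : ℝ≥0∞) ∂μ := fun n =>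
    meas_le_lintegral₀ ((Measurable.of_discrete (f := ((↑) : ℕ → ℝ≥0∞))).comp (hf n)).aemeasurable
      fun ω hω => by simpa [Nat.one_le_iff_ne_zero] using hω
  filter_upwards [ae_eventually_notMem (ne_top_of_le_ne_top h (ENNReal.tsum_le_tsum hle))]
    with ω hω
  simpa using hω

end

namespace GaltonWatson

variable {Ω : Type*} {ξ : ℕ × ℕ → Ω → ℕ} {X : ℕ → Ω → ℕ}

abbrev pastOffspring (ξ : ℕ × ℕ → Ω → ℕ) (n : ℕ) : MeasurableSpace Ω :=
  ⨆ p ∈ {q : ℕ × ℕ | q.1 < n}, MeasurableSpace.comap (ξ p) inferInstance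

lemma pastOffspring_mono : Monotone (pastOffspring ξ) :=
  fun _ _ hnm => biSup_mono fun _ hp => lt_of_lt_of_le hp hnm

lemma measurable_offspring_pastOffspring_succ (n i : ℕ) :
    Measurable[pastOffspring ξ (n + 1)] (ξ (n, i)) :=
  measurable_iff_comap_le.2 <| le_iSup₂ (f := fun (p : ℕ × ℕ) (_ : p.1 < n + 1) =>
    MeasurableSpace.comap (ξ p) inferInstance) (n, i) n.lt_succ_self

lemma measurable_pastOffspring (hX0 : ∀ ω, X 0 ω = 1)
    (hXsucc : ∀ n ω, X (n + 1) ω = ∑ i ∈ Finset.range (X n ω), ξ (n, i) ω) (n : ℕ) :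
    Measurable[pastOffspring ξ n] (X n) := by
  induction n with
  | zero => simpa only [funext hX0] using measurable_const
  | succ n ih =>
    rw [funext (hXsucc n)]
    exact Measurable.sum_range_of_nat (ih.mono (pastOffspring_mono n.le_succ) le_rfl)
      (measurable_offspring_pastOffspring_succ n)

variable [MeasurableSpace Ω] {μ : Measure Ω}

lemma pastOffspring_le (hmeas : ∀ p, Measurable (ξ p)) (n : ℕ) :
    pastOffspring ξ n ≤ ‹MeasurableSpace Ω› :=
  iSup₂_le fun p _ => (hmeas p).comap_le

lemma indepFun_offspring (hmeas : ∀ p, Measurable (ξ p)) (hindep : iIndepFun ξ μ)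
    (hX0 : ∀ ω, X 0 ω = 1)
    (hXsucc : ∀ n ω, X (n + 1) ω = ∑ i ∈ Finset.range (X n ω), ξ (n, i) ω) (n i : ℕ) :
    IndepFun (X n) (ξ (n, i)) μ := by
  have h := indep_iSup_of_disjoint (fun p => (hmeas p).comap_le) hindep.iIndep
    (S := {q : ℕ × ℕ | q.1 < n}) (T := {(n, i)}) (by simp [Set.disjoint_singleton_right])
  rw [_root_.iSup_singleton] at h
  exact indep_of_indep_of_le_left h (measurable_pastOffspring hX0 hXsucc n).comap_le

lemma measurable_generation (hmeas : ∀ p, Measurable (ξ p)) (hX0 : ∀ ω, X 0 ω = 1)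
    (hXsucc : ∀ n ω, X (n + 1) ω = ∑ i ∈ Finset.range (X n ω), ξ (n, i) ω) (n : ℕ) :
    Measurable (X n) :=
  (measurable_pastOffspring hX0 hXsucc n).mono (pastOffspring_le hmeas n) le_rfl

lemma lintegral_eq_pow [IsProbabilityMeasure μ] (hmeas : ∀ p, Measurable (ξ p))
    (hindep : iIndepFun ξ μ) (hident : ∀ p, IdentDistrib (ξ p) (ξ (0, 0)) μ μ)
    (hX0 : ∀ ω, X 0 ω = 1)
    (hXsucc : ∀ n ω, X (n + 1) ω = ∑ i ∈ Finset.range (X n ω), ξ (n, i) ω) (n : ℕ) :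
    ∫⁻ ω, (X n ω : ℝ≥0∞) ∂μ = (∫⁻ ω, (ξ (0, 0) ω : ℝ≥0∞) ∂μ) ^ n := by
  induction n with
  | zero => simp [hX0]
  | succ n ih =>
    simp_rw [hXsucc n]
    rw [lintegral_sum_range_eq_mul (measurable_generation hmeas hX0 hXsucc n)
      (fun i => hmeas (n, i)) (indepFun_offspring hmeas hindep hX0 hXsucc n)
      fun i =>
        ((hident (n, i)).comp (Measurable.of_discrete (f := ((↑) : ℕ → ℝ≥0∞)))).lintegral_eq,
      ih, pow_succ]
    rfl

lemma integral_eq_pow [IsProbabilityMeasure μ] (hmeas : ∀ p, Measurable (ξ p))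
    (hindep : iIndepFun ξ μ) (hident : ∀ p, IdentDistrib (ξ p) (ξ (0, 0)) μ μ)
    (hX0 : ∀ ω, X 0 ω = 1)
    (hXsucc : ∀ n ω, X (n + 1) ω = ∑ i ∈ Finset.range (X n ω), ξ (n, i) ω) (n : ℕ) :
    ∫ ω, (X n ω : ℝ) ∂μ = (∫ ω, (ξ (0, 0) ω : ℝ) ∂μ) ^ n := by
  rw [integral_natCast_eq_toReal_lintegral (measurable_generation hmeas hX0 hXsucc n),
    integral_natCast_eq_toReal_lintegral (hmeas (0, 0)),
    lintegral_eq_pow hmeas hindep hident hX0 hXsucc, ENNReal.toReal_pow]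

lemma ae_eventually_eq_zero_of_integral_lt_one [IsProbabilityMeasure μ]
    (hmeas : ∀ p, Measurable (ξ p)) (hindep : iIndepFun ξ μ)
    (hident : ∀ p, IdentDistrib (ξ p) (ξ (0, 0)) μ μ)
    (hint : Integrable (fun ω => (ξ (0, 0) ω : ℝ)) μ) (hm : ∫ ω, (ξ (0, 0) ω : ℝ) ∂μ < 1)
    (hX0 : ∀ ω, X 0 ω = 1)
    (hXsucc : ∀ n ω, X (n + 1) ω = ∑ i ∈ Finset.range (X n ω), ξ (n, i) ω) :
    ∀ᵐ ω ∂μ, ∃ N, ∀ n ≥ N, X n ω = 0 := by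
  have hc : ∫⁻ ω, (ξ (0, 0) ω : ℝ≥0∞) ∂μ < 1 := by
    simpa [ofReal_integral_eq_lintegral_ofReal hint (ae_of_all _ fun ω => Nat.cast_nonneg _)]
      using ENNReal.ofReal_lt_one.2 hm
  have hsum : ∑' n, ∫⁻ ω, (X n ω : ℝ≥0∞) ∂μ ≠ ∞ := by
    simp_rw [lintegral_eq_pow hmeas hindep hident hX0 hXsucc, ENNReal.tsum_geometric]
    exact ENNReal.inv_ne_top.2 (tsub_pos_of_lt hc).ne'
  simpa only [eventually_atTop] using
    ae_eventually_eq_zero_of_tsum_lintegral_ne_top (measurable_generation hmeas hX0 hXsucc) hsum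

end GaltonWatson

/-- For `T_p = 0.1`, the schedules (1,5,2) and (2,5,0) have effective reproduction
number `m > 1` (values 6.164 and 2.278), so the expected generation sizes
`E[X n] = m ^ n` of the associated Galton–Watson process grow without bound;
whereas (3,3,0) and (4,4,0) have `m < 1` (values 0.804 and 0.67), so `E[X n] → 0`
and the associated process dies out almost surely. -/
theorem schedules_dichotomy_at_high_Tp
    (g d t : ℕ)
    {Ω : Type*} [MeasurableSpace Ω] (μ : Measure Ω) [IsProbabilityMeasure μ]
    (ξ : ℕ × ℕ → Ω → ℕ)
    (hmeas : ∀ p, Measurable (ξ p))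
    (hindep : iIndepFun ξ μ)
    (hident : ∀ p, IdentDistrib (ξ p) (ξ (0, 0)) μ μ)
    (hint : Integrable (fun ω => (ξ (0, 0) ω : ℝ)) μ)
    (hmean : ∫ ω, (ξ (0, 0) ω : ℝ) ∂μ = effR g d t 0.1)
    (X : ℕ → Ω → ℕ)
    (hX0 : ∀ ω, X 0 ω = 1)
    (hXsucc : ∀ n ω, X (n + 1) ω = ∑ i ∈ Finset.range (X n ω), ξ (n, i) ω) :
    (((g, d, t) = (1, 5, 2) ∨ (g, d, t) = (2, 5, 0)) →
      1 < effR g d t 0.1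
      ∧ ((g, d, t) = (1, 5, 2) → effR g d t 0.1 = 6.164)
      ∧ ((g, d, t) = (2, 5, 0) → effR g d t 0.1 = 2.278)
      ∧ (∀ n : ℕ, ∫ ω, (X n ω : ℝ) ∂μ = (effR g d t 0.1) ^ n)
      ∧ Tendsto (fun n : ℕ => ∫ ω, (X n ω : ℝ) ∂μ) atTop atTop)
    ∧ (((g, d, t) = (3, 3, 0) ∨ (g, d, t) = (4, 4, 0)) →
      effR g d t 0.1 < 1
      ∧ ((g, d, t) = (3, 3, 0) → effR g d t 0.1 = 0.804)
      ∧ ((g, d, t) = (4, 4, 0) → effR g d t 0.1 = 0.67)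
      ∧ Tendsto (fun n : ℕ => ∫ ω, (X n ω : ℝ) ∂μ) atTop (nhds 0)
      ∧ (∀ᵐ ω ∂μ, ∃ N : ℕ, ∀ n ≥ N, X n ω = 0)) := by
  have hE : ∀ n, ∫ ω, (X n ω : ℝ) ∂μ = effR g d t 0.1 ^ n := fun n => by
    rw [GaltonWatson.integral_eq_pow hmeas hindep hident hX0 hXsucc, hmean]
  have h152 : (g, d, t) = (1, 5, 2) → effR g d t 0.1 = 6.164 := by
    rintro ⟨⟩; exact effR_one_five_two
  have h250 : (g, d, t) = (2, 5, 0) → effR g d t 0.1 = 2.278 := by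
    rintro ⟨⟩; exact effR_two_five_zero
  have h330 : (g, d, t) = (3, 3, 0) → effR g d t 0.1 = 0.804 := by
    rintro ⟨⟩; exact effR_three_three_zero
  have h440 : (g, d, t) = (4, 4, 0) → effR g d t 0.1 = 0.67 := by
    rintro ⟨⟩; exact effR_four_four_zero
  refine ⟨fun h => ?_, fun h => ?_⟩
  · have hm : 1 < effR g d t 0.1 := by
      rcases h with h | h
      · rw [h152 h]; norm_num
      · rw [h250 h]; norm_num
    refine ⟨hm, h152, h250, hE, ?_⟩
    simpa only [hE] using tendsto_pow_atTop_atTop_of_one_lt hm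
  · have hm : effR g d t 0.1 < 1 := by
      rcases h with h | h
      · rw [h330 h]; norm_num
      · rw [h440 h]; norm_num
    refine ⟨hm, h330, h440, ?_, GaltonWatson.ae_eventually_eq_zero_of_integral_lt_one
      hmeas hindep hident hint (hmean ▸ hm) hX0 hXsucc⟩
    simpa only [hE] using
      tendsto_pow_atTop_nhds_zero_of_lt_one (effR_nonneg g d t (by norm_num)) hm
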